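/- arXiv:0910.3994 — 2 statements merged into one kernel-verified Lean document; each statement's English description precedes it below -/
import Mathlib

section
/- Reversibility of the generator: Let N ≥ 2, d ≥ 1, C_+ > 0, C_- > 0, C_E ≥ 0, C_A > 0, C_C > 0, and fix ρ ∈ (-1,1). Let L_N be the generator on functions f : {-1,0,1}^{T^d_N} → R given by L_N f(η) = Σ_b L_b f(η), the sum over all ordered pairs b of nearest-neighbour sites of T^d_N = (Z/NZ)^d. Then L_N is self-adjoint in L²(ν_ρ): for all functions f, g, Σ_η ν_ρ({η})·(L_N f)(η)·g(η) = Σ_η ν_ρ({η})·f(η)·(L_N g)(η). -/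
open Finset

/-- Spin value of a configuration at a site: the `Fin 3` values `0, 1, 2`
code the spins `-1, 0, 1` respectively. -/
def spin {V : Type*} (η : V → Fin 3) (x : V) : ℤ := (η x : ℤ) - 1

/-- The configuration `η^{(x,y)}`: swap the values at `x` and `y` in the three exchange cases,
annihilate a `(+,-)` pair, or create a `(-,+)` pair from two empty sites. -/
def cfgFlip {V : Type*} [DecidableEq V] (x y : V) (η : V → Fin 3) : V → Fin 3 := fun z =>
  if z = x then (if η x = 2 ∧ η y = 0 then 1 else if η x = 1 ∧ η y = 1 then 0 else η y)
  else if z = y then (if η x = 2 ∧ η y = 0 then 1 else if η x = 1 ∧ η y = 1 then 2 else η x)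
  else η z

/-- The jump rate `c_{(x,y)}(η)`. -/
def rate {V : Type*} (Cp Cm CE CA CC : ℝ) (x y : V) (η : V → Fin 3) : ℝ :=
  if η x = 2 ∧ η y = 1 then Cp
  else if η x = 1 ∧ η y = 0 then Cm
  else if η x = 0 ∧ η y = 2 then CE
  else if η x = 2 ∧ η y = 0 then CA
  else if η x = 1 ∧ η y = 1 then CC
  else 0

/-- The single-bond generator `L_{(x,y)} f (η) = c_{(x,y)}(η) (f(η^{(x,y)}) - f(η))`. -/
noncomputable def Lbond {V : Type*} [DecidableEq V] (Cp Cm CE CA CC : ℝ) (x y : V)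
    (f : (V → Fin 3) → ℝ) (η : V → Fin 3) : ℝ :=
  rate Cp Cm CE CA CC x y η * (f (cfgFlip x y η) - f η)

/-- `Φ(ρ)`, the probability of an empty site, with `β = C_C / C_A`. -/
noncomputable def Phi (β ρ : ℝ) : ℝ :=
  if β = 1 / 4 then (1 - ρ ^ 2) / 2
  else (1 - Real.sqrt (4 * β + ρ ^ 2 - 4 * β * ρ ^ 2)) / (1 - 4 * β)

/-- The single-site marginal weight of `ν_ρ`. -/
noncomputable def wgt (β ρ : ℝ) : Fin 3 → ℝ := fun v =>
  if v = 0 then (1 - Phi β ρ - ρ) / 2 else if v = 1 then Phi β ρ else (1 - Phi β ρ + ρ) / 2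

/-- The product measure `ν_ρ` (as a weight function on configurations on a finite site set). -/
noncomputable def nuProd {V : Type*} [Fintype V] (β ρ : ℝ) (η : V → Fin 3) : ℝ :=
  ∏ x, wgt β ρ (η x)

/-- `x` and `y` are nearest neighbours on the discrete torus `(ℤ/Nℤ)^d`. -/
def torusNbr {d N : ℕ} (x y : Fin d → ZMod N) : Prop :=
  ∃ i : Fin d, y = x + Pi.single i 1 ∨ y = x - Pi.single i 1

instance {d N : ℕ} (x y : Fin d → ZMod N) : Decidable (torusNbr x y) := by
  unfold torusNbr; infer_instance

/-- The full generator `L_N`: sum of `L_b` over all ordered nearest-neighbour bonds of the torus. -/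
noncomputable def LTorus (d N : ℕ) [NeZero N] (Cp Cm CE CA CC : ℝ)
    (f : ((Fin d → ZMod N) → Fin 3) → ℝ) (η : (Fin d → ZMod N) → Fin 3) : ℝ :=
  ∑ x : Fin d → ZMod N, ∑ y : Fin d → ZMod N,
    if torusNbr x y then Lbond Cp Cm CE CA CC x y f η else 0

/-!
The rates satisfy detailed balance with respect to `ν_ρ`: exchanges are balanced trivially, and
annihilation `(+,-) → (0,0)` against creation `(0,0) → (-,+)` on the reversed bond is balanced
exactly when `ν(+) ν(-) C_A = ν(0)² C_C`, which is the quadratic equation that `Φ` solves. For a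
jump `e` with reverse jump `e⁻¹`, detailed balance makes `L_e + L_{e⁻¹}` symmetric in `L²(ν_ρ)`;
the nearest-neighbour relation of the torus is symmetric, so `L_N` is a sum of such pairs.
-/

section JumpProcess

variable {Ω : Type*} [Fintype Ω]

def jumpOp (c : Ω → ℝ) (s : Ω → Ω) (F : Ω → ℝ) (η : Ω) : ℝ :=
  c η * (F (s η) - F η)

lemma sum_mul_comp_equiv_of_detailedBalance {π c c' : Ω → ℝ} {e : Ω ≃ Ω}
    (hdb : ∀ η, π η * c η = π (e η) * c' (e η)) (F G : Ω → ℝ) :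
    ∑ η, π η * c η * F (e η) * G η = ∑ ξ, π ξ * c' ξ * F ξ * G (e.symm ξ) := by
  refine Fintype.sum_equiv e _ _ fun η => ?_
  rw [e.symm_apply_apply, hdb]

lemma sum_jumpOp_add_jumpOp_symm_comm {π c c' : Ω → ℝ} {e : Ω ≃ Ω}
    (hdb : ∀ η, π η * c η = π (e η) * c' (e η)) (F G : Ω → ℝ) :
    ∑ η, π η * jumpOp c e F η * G η + ∑ η, π η * jumpOp c' e.symm F η * G η =
      ∑ η, π η * jumpOp c e G η * F η + ∑ η, π η * jumpOp c' e.symm G η * F η := by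
  linear_combination (norm := skip) sum_mul_comp_equiv_of_detailedBalance hdb F G -
    sum_mul_comp_equiv_of_detailedBalance hdb G F
  simp only [jumpOp, ← sum_add_distrib, ← sum_sub_distrib]
  exact sum_eq_zero fun η _ => by ring

end JumpProcess

lemma sum_sum_ite_eq_of_symm {α : Type*} [Fintype α] {R : α → α → Prop} [DecidableRel R]
    (hR : ∀ x y, R x y → R y x) {a b : α → α → ℝ}
    (h : ∀ x y, R x y → a x y + a y x = b x y + b y x) :
    ∑ x, ∑ y, (if R x y then a x y else 0) = ∑ x, ∑ y, if R x y then b x y else 0 := by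
  have doubled : ∀ a : α → α → ℝ, 2 * ∑ x, ∑ y, (if R x y then a x y else 0) =
      ∑ x, ∑ y, if R x y then a x y + a y x else 0 := by
    intro a
    have swap : ∑ x, ∑ y, (if R x y then a x y else 0) =
        ∑ x, ∑ y, if R x y then a y x else 0 := by
      rw [sum_comm]
      exact sum_congr rfl fun x _ => sum_congr rfl fun y _ =>
        if_congr ⟨hR y x, hR x y⟩ rfl rfl
    rw [two_mul]
    nth_rewrite 2 [swap]
    simp only [← sum_add_distrib]
    exact sum_congr rfl fun x _ => sum_congr rfl fun y _ => by split_ifs <;> simp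
  have hab : ∑ x, ∑ y, (if R x y then a x y + a y x else 0) =
      ∑ x, ∑ y, if R x y then b x y + b y x else 0 :=
    sum_congr rfl fun x _ => sum_congr rfl fun y _ => by split_ifs with hxy <;> simp [h x y, hxy]
  linarith [doubled a, doubled b]

lemma sum_mul_sum_sum_ite_mul {α Ω : Type*} [Fintype α] [Fintype Ω] (R : α → α → Prop)
    [DecidableRel R] (w G : Ω → ℝ) (L : α → α → Ω → ℝ) :
    ∑ η, w η * (∑ x, ∑ y, if R x y then L x y η else 0) * G η =
      ∑ x, ∑ y, if R x y then ∑ η, w η * L x y η * G η else 0 := by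
  simp only [mul_sum, sum_mul, mul_ite, ite_mul, mul_zero, zero_mul]
  rw [sum_comm]
  refine sum_congr rfl fun x _ => ?_
  rw [sum_comm]
  exact sum_congr rfl fun y _ => (sum_ite_irrel ..).trans (by simp)

lemma one_sub_Phi_sq_sub_sq {β ρ : ℝ} (hβ : 0 ≤ β) (hρ : ρ ^ 2 ≤ 1) :
    (1 - Phi β ρ) ^ 2 - ρ ^ 2 = 4 * β * Phi β ρ ^ 2 := by
  unfold Phi
  split_ifs with hβ4
  · subst hβ4; ring
  · have hD : 0 ≤ 4 * β + ρ ^ 2 - 4 * β * ρ ^ 2 := by nlinarith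
    have hs := Real.sq_sqrt hD
    have h4 : 1 - 4 * β ≠ 0 := fun h => hβ4 (by linarith)
    field_simp
    linear_combination (1 - 4 * β) * hs

lemma wgt_two_mul_wgt_zero {β ρ : ℝ} (hβ : 0 ≤ β) (hρ : ρ ^ 2 ≤ 1) :
    wgt β ρ 2 * wgt β ρ 0 = β * wgt β ρ 1 ^ 2 := by
  simp only [wgt, Fin.reduceEq, if_true, if_false]
  linear_combination one_sub_Phi_sq_sub_sq hβ hρ / 4

lemma fin_three_cases (a : Fin 3) : a = 0 ∨ a = 1 ∨ a = 2 := by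
  fin_cases a <;> simp

section Bond

variable {V : Type*} [DecidableEq V]

/-- Every transition of the bond `(x, y)` lowers the spin at `x` and raises the spin at `y` by
one, modulo `3`. -/
def bondShift (x y : V) : V → Fin 3 := Pi.single y 1 - Pi.single x 1

lemma bondShift_swap (x y : V) : bondShift y x = -bondShift x y :=
  (neg_sub _ _).symm

lemma add_bondShift_apply_left {x y : V} (hxy : x ≠ y) (η : V → Fin 3) :
    (η + bondShift x y) x = η x - 1 := by
  simp [bondShift, hxy, sub_eq_add_neg]

lemma add_bondShift_apply_right {x y : V} (hxy : x ≠ y) (η : V → Fin 3) :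
    (η + bondShift x y) y = η y + 1 := by
  simp [bondShift, Ne.symm hxy]

lemma add_bondShift_apply_of_ne {x y z : V} (hzx : z ≠ x) (hzy : z ≠ y) (η : V → Fin 3) :
    (η + bondShift x y) z = η z := by
  simp [bondShift, hzx, hzy]

lemma cfgFlip_eq_add_bondShift {Cp Cm CE CA CC : ℝ} {x y : V} (hxy : x ≠ y) {η : V → Fin 3}
    (hη : rate Cp Cm CE CA CC x y η ≠ 0) : cfgFlip x y η = η + bondShift x y := by
  funext z
  by_cases hzx : z = x
  · subst hzx
    rw [add_bondShift_apply_left hxy]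
    -- without `zero_sub`, `0 - 1 : Fin 3` stays a literal that `simp` evaluates to `2`
    rcases fin_three_cases (η z) with ha | ha | ha <;>
    rcases fin_three_cases (η y) with hb | hb | hb <;>
      simp_all [rate, cfgFlip, -zero_sub]
  · by_cases hzy : z = y
    · subst hzy
      rw [add_bondShift_apply_right hxy]
      rcases fin_three_cases (η x) with ha | ha | ha <;>
      rcases fin_three_cases (η z) with hb | hb | hb <;>
        simp_all [rate, cfgFlip, -zero_sub]
    · rw [add_bondShift_apply_of_ne hzx hzy]
      simp [cfgFlip, hzx, hzy]

lemma Lbond_eq_jumpOp (Cp Cm CE CA CC : ℝ) {x y : V} (hxy : x ≠ y) :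
    Lbond Cp Cm CE CA CC x y =
      jumpOp (rate Cp Cm CE CA CC x y) (Equiv.addRight (bondShift x y)) := by
  funext F η
  by_cases hη : rate Cp Cm CE CA CC x y η = 0
  · simp [Lbond, jumpOp, hη]
  · rw [Lbond, jumpOp, cfgFlip_eq_add_bondShift hxy hη, Equiv.coe_addRight]

variable [Fintype V]

lemma nuProd_eq_mul_mul_prod_compl (β ρ : ℝ) {x y : V} (hxy : x ≠ y) (η : V → Fin 3) :
    nuProd β ρ η = wgt β ρ (η x) * wgt β ρ (η y) * ∏ z ∈ {x, y}ᶜ, wgt β ρ (η z) := by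
  rw [nuProd, ← prod_mul_prod_compl {x, y}, prod_pair hxy]

lemma nuProd_mul_rate_eq {β ρ Cp Cm CE CA CC : ℝ}
    (hw : wgt β ρ 2 * wgt β ρ 0 * CA = wgt β ρ 1 * wgt β ρ 1 * CC)
    {x y : V} (hxy : x ≠ y) (η : V → Fin 3) :
    nuProd β ρ η * rate Cp Cm CE CA CC x y η =
      nuProd β ρ (η + bondShift x y) * rate Cp Cm CE CA CC y x (η + bondShift x y) := by
  have hrest : ∏ z ∈ {x, y}ᶜ, wgt β ρ ((η + bondShift x y) z) = ∏ z ∈ {x, y}ᶜ, wgt β ρ (η z) :=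
    prod_congr rfl fun z hz => by
      simp only [mem_compl, mem_insert, mem_singleton, not_or] at hz
      rw [add_bondShift_apply_of_ne hz.1 hz.2]
  simp only [nuProd_eq_mul_mul_prod_compl β ρ hxy, hrest, rate, add_bondShift_apply_left hxy,
    add_bondShift_apply_right hxy]
  generalize ∏ z ∈ {x, y}ᶜ, wgt β ρ (η z) = R
  rcases fin_three_cases (η x) with ha | ha | ha <;>
  rcases fin_three_cases (η y) with hb | hb | hb <;>
    simp [ha, hb, -zero_sub, -mul_eq_mul_right_iff, -mul_eq_mul_left_iff]
  all_goals first | linear_combination R * hw | linear_combination -R * hw | ring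

lemma sum_Lbond_add_Lbond_swap_comm {β ρ Cp Cm CE CA CC : ℝ}
    (hw : wgt β ρ 2 * wgt β ρ 0 * CA = wgt β ρ 1 * wgt β ρ 1 * CC)
    {x y : V} (hxy : x ≠ y) (F G : (V → Fin 3) → ℝ) :
    ∑ η, nuProd β ρ η * Lbond Cp Cm CE CA CC x y F η * G η +
        ∑ η, nuProd β ρ η * Lbond Cp Cm CE CA CC y x F η * G η =
      ∑ η, nuProd β ρ η * Lbond Cp Cm CE CA CC x y G η * F η +
        ∑ η, nuProd β ρ η * Lbond Cp Cm CE CA CC y x G η * F η := by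
  have hsymm : Equiv.addRight (bondShift y x) = (Equiv.addRight (bondShift x y)).symm := by
    rw [Equiv.addRight_symm, bondShift_swap]
  rw [Lbond_eq_jumpOp _ _ _ _ _ hxy, Lbond_eq_jumpOp _ _ _ _ _ (Ne.symm hxy), hsymm]
  exact sum_jumpOp_add_jumpOp_symm_comm (nuProd_mul_rate_eq hw hxy) F G

end Bond

lemma torusNbr.symm {d N : ℕ} {x y : Fin d → ZMod N} (h : torusNbr x y) : torusNbr y x := by
  obtain ⟨i, h | h⟩ := h
  · exact ⟨i, Or.inr (by rw [h]; abel)⟩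
  · exact ⟨i, Or.inl (by rw [h]; abel)⟩

lemma torusNbr.ne {d N : ℕ} (hN : 1 < N) {x y : Fin d → ZMod N} (h : torusNbr x y) :
    x ≠ y := by
  have : Fact (1 < N) := ⟨hN⟩
  rintro rfl
  obtain ⟨i, h | h⟩ := h
  · simpa using congrFun (left_eq_add.mp h) i
  · simpa using congrFun (sub_eq_self.mp h.symm) i

theorem two_species_generator_self_adjoint_general
    (N d : ℕ) [NeZero N] (hN : 2 ≤ N)
    (Cp Cm CE CA CC : ℝ)
    (hCA : 0 < CA) (hCC : 0 < CC)
    (ρ : ℝ) (hρ : ρ ∈ Set.Ioo (-1 : ℝ) 1)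
    (f g : ((Fin d → ZMod N) → Fin 3) → ℝ) :
    ∑ η : (Fin d → ZMod N) → Fin 3,
        nuProd (CC / CA) ρ η * LTorus d N Cp Cm CE CA CC f η * g η =
      ∑ η : (Fin d → ZMod N) → Fin 3,
        nuProd (CC / CA) ρ η * f η * LTorus d N Cp Cm CE CA CC g η := by
  have hρ2 : ρ ^ 2 ≤ 1 := by nlinarith [hρ.1, hρ.2]
  have hw : wgt (CC / CA) ρ 2 * wgt (CC / CA) ρ 0 * CA =
      wgt (CC / CA) ρ 1 * wgt (CC / CA) ρ 1 * CC := by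
    rw [wgt_two_mul_wgt_zero (div_pos hCC hCA).le hρ2]
    field_simp
  have hswap : ∑ η, nuProd (CC / CA) ρ η * f η * LTorus d N Cp Cm CE CA CC g η =
      ∑ η, nuProd (CC / CA) ρ η * LTorus d N Cp Cm CE CA CC g η * f η :=
    sum_congr rfl fun η _ => mul_right_comm _ _ _
  rw [hswap]
  unfold LTorus
  rw [sum_mul_sum_sum_ite_mul, sum_mul_sum_sum_ite_mul]
  exact sum_sum_ite_eq_of_symm (fun _ _ => torusNbr.symm) fun x y hxy =>
    sum_Lbond_add_Lbond_swap_comm hw (hxy.ne hN) f g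

/-- the generator `L_N` is self-adjoint in `L²(ν_ρ)`. -/
theorem two_species_generator_self_adjoint
    (N d : ℕ) [NeZero N] (hN : 2 ≤ N) (hd : 1 ≤ d)
    (Cp Cm CE CA CC : ℝ)
    (hCp : 0 < Cp) (hCm : 0 < Cm) (hCE : 0 ≤ CE) (hCA : 0 < CA) (hCC : 0 < CC)
    (ρ : ℝ) (hρ : ρ ∈ Set.Ioo (-1 : ℝ) 1)
    (f g : ((Fin d → ZMod N) → Fin 3) → ℝ) :
    ∑ η : (Fin d → ZMod N) → Fin 3,
        nuProd (CC / CA) ρ η * LTorus d N Cp Cm CE CA CC f η * g η =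
      ∑ η : (Fin d → ZMod N) → Fin 3,
        nuProd (CC / CA) ρ η * f η * LTorus d N Cp Cm CE CA CC g η :=
  two_species_generator_self_adjoint_general N d hN Cp Cm CE CA CC hCA hCC ρ hρ f g
end

section
/- Comparison of Dirichlet forms (Lemma in Section 3.4): Assume C_+, C_-, C_A, C_C are positive constants and C_E ≥ 0. Then there exists a positive constant C (one may take C = min{C_+, C_-, C_A/3}) such that for every positive integer N, every integer K with -|Ω_N| ≤ K ≤ |Ω_N|, every function f : Y_{N,K} → R, and every ordered pair b = (x,y) of distinct sites of Ω_N: C·⟨(-L̃_{xy} - L̃_{yx})f, f⟩_{N,K} ≤ ⟨(-L_{(x,y)} - L_{(y,x)})f, f⟩_{N,K}. -/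
open Finset

/-- Nearest neighbours in the box `Ω_N = {1,...,N}^d`: `|x - y| = 1` in the sum norm. -/
def boxNbr {d N : ℕ} (x y : Fin d → Fin N) : Prop :=
  (∑ i, |((x i : ℤ) - (y i : ℤ))|) = 1

instance {d N : ℕ} (x y : Fin d → Fin N) : Decidable (boxNbr x y) := by
  unfold boxNbr; infer_instance

/-- Number of sites occupied by `-` particles (`Fin 3` value `0`). -/
def minusCount {V : Type*} [Fintype V] [DecidableEq V] (η : V → Fin 3) : ℕ :=
  (univ.filter fun x => η x = 0).card

/-- Total charge `Σ_x η(x)`. -/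
def charge {V : Type*} [Fintype V] (η : V → Fin 3) : ℤ := ∑ x, spin η x

/-- Normalization constant of the canonical measure `μ_{N,K}` on `Ω_N = {1,...,N}^d`
(weights proportional to `β^{X(η)}` on configurations with charge `K`). -/
noncomputable def canZ (d N : ℕ) (β : ℝ) (K : ℤ) : ℝ :=
  ∑ η : (Fin d → Fin N) → Fin 3, if charge η = K then β ^ minusCount η else 0

/-- Expectation `⟨f⟩_{N,K}` with respect to the canonical measure `μ_{N,K}`. -/
noncomputable def canMean (d N : ℕ) (β : ℝ) (K : ℤ)
    (f : ((Fin d → Fin N) → Fin 3) → ℝ) : ℝ :=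
  (∑ η : (Fin d → Fin N) → Fin 3,
      if charge η = K then β ^ minusCount η * f η else 0) / canZ d N β K

lemma eq_of_eq_at_pair_of_eq_off_pair {V α : Type*} {x y : V} {η ζ : V → α}
    (hx : η x = ζ x) (hy : η y = ζ y) (h : ∀ z, z ≠ x → z ≠ y → η z = ζ z) : η = ζ := by
  funext z
  by_cases hzx : z = x
  · rwa [hzx]
  by_cases hzy : z = y
  · rwa [hzy]
  exact h z hzx hzy

/-- The action of `cfgFlip x y` on the pair of values `(η x, η y)`. -/
def pairFlip (p : Fin 3 × Fin 3) : Fin 3 × Fin 3 :=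
  if p = (2, 0) then (1, 1) else if p = (1, 1) then (0, 2) else p.swap

section Flip

variable {V : Type*} [DecidableEq V] {x y : V}

lemma cfgFlip_apply_left (η : V → Fin 3) : cfgFlip x y η x = (pairFlip (η x, η y)).1 := by
  unfold cfgFlip pairFlip; split_ifs <;> simp_all [Prod.ext_iff]

lemma cfgFlip_apply_right (hxy : x ≠ y) (η : V → Fin 3) :
    cfgFlip x y η y = (pairFlip (η x, η y)).2 := by
  unfold cfgFlip pairFlip; split_ifs <;> simp_all [Prod.ext_iff]

lemma cfgFlip_apply_of_ne {z : V} (hzx : z ≠ x) (hzy : z ≠ y) (η : V → Fin 3) :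
    cfgFlip x y η z = η z := by
  simp [cfgFlip, hzx, hzy]

lemma cfgFlip_swap_cfgFlip (hxy : x ≠ y) (η : V → Fin 3) :
    cfgFlip y x (cfgFlip x y η) = η := by
  refine eq_of_eq_at_pair_of_eq_off_pair (x := x) (y := y) ?_ ?_ fun z hzx hzy => ?_
  · rw [cfgFlip_apply_right hxy.symm, cfgFlip_apply_left, cfgFlip_apply_right hxy]
    generalize η x = a, η y = b
    revert a b; decide
  · rw [cfgFlip_apply_left, cfgFlip_apply_left, cfgFlip_apply_right hxy]
    generalize η x = a, η y = b
    revert a b; decide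
  · rw [cfgFlip_apply_of_ne hzy hzx, cfgFlip_apply_of_ne hzx hzy]

def flipEquiv (hxy : x ≠ y) : (V → Fin 3) ≃ (V → Fin 3) where
  toFun := cfgFlip x y
  invFun := cfgFlip y x
  left_inv := cfgFlip_swap_cfgFlip hxy
  right_inv := cfgFlip_swap_cfgFlip hxy.symm

lemma cfgFlip_apply_of_minus_plus (hxy : x ≠ y) {η : V → Fin 3} (h : η x = 0 ∧ η y = 2) :
    cfgFlip x y η x = 2 ∧ cfgFlip x y η y = 0 := by
  rw [cfgFlip_apply_left, cfgFlip_apply_right hxy, h.1, h.2]; decide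

lemma cfgFlip_apply_of_annihilation (hxy : x ≠ y) {η : V → Fin 3} (h : η x = 2 ∧ η y = 0) :
    cfgFlip x y η x = 1 ∧ cfgFlip x y η y = 1 := by
  rw [cfgFlip_apply_left, cfgFlip_apply_right hxy, h.1, h.2]; decide

lemma cfgFlip_apply_of_creation (hxy : x ≠ y) {η : V → Fin 3} (h : η x = 1 ∧ η y = 1) :
    cfgFlip x y η x = 0 ∧ cfgFlip x y η y = 2 := by
  rw [cfgFlip_apply_left, cfgFlip_apply_right hxy, h.1, h.2]; decide

lemma cfgFlip_cfgFlip_cfgFlip (hxy : x ≠ y) {η : V → Fin 3} (h : η x = 0 ∧ η y = 2) :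
    cfgFlip x y (cfgFlip x y (cfgFlip x y η)) = η := by
  refine eq_of_eq_at_pair_of_eq_off_pair (x := x) (y := y) ?_ ?_ fun z hzx hzy => ?_
  · simp only [cfgFlip_apply_left, cfgFlip_apply_right hxy, h.1, h.2]; decide
  · simp only [cfgFlip_apply_left, cfgFlip_apply_right hxy, h.1, h.2]; decide
  · simp only [cfgFlip_apply_of_ne hzx hzy]

lemma rate_swap_cfgFlip_of_exchange (hxy : x ≠ y) (Cp Cm CE CA CC : ℝ) {η : V → Fin 3}
    (hA : ¬(η x = 2 ∧ η y = 0)) (hC : ¬(η x = 1 ∧ η y = 1)) :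
    rate Cp Cm CE CA CC y x (cfgFlip x y η) = rate Cp Cm CE CA CC x y η := by
  rcases fin_three_cases (η x) with hx | hx | hx <;>
  rcases fin_three_cases (η y) with hy | hy | hy <;>
  simp_all [rate, cfgFlip_apply_left, cfgFlip_apply_right hxy, pairFlip]

end Flip

section Weight

variable {V : Type*} [Fintype V] [DecidableEq V] {x y : V}

lemma sum_comp_cfgFlip {M : Type*} [AddCommMonoid M] (hxy : x ≠ y) (g : (V → Fin 3) → M) :
    ∑ η, g (cfgFlip x y η) = ∑ η, g η :=
  (flipEquiv hxy).sum_comp g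

lemma sum_add_eq_of_eq_off_pair {M : Type*} [AddCommMonoid M] (hxy : x ≠ y) {F G : V → M}
    (h : ∀ z, z ≠ x → z ≠ y → F z = G z) :
    ∑ z, F z + (G x + G y) = ∑ z, G z + (F x + F y) := by
  rw [← sum_add_sum_compl {x, y} F, ← sum_add_sum_compl {x, y} G, sum_pair hxy, sum_pair hxy,
    sum_congr rfl fun z hz => h z (by simp_all) (by simp_all)]
  abel

lemma sum_comp_cfgFlip_add {M : Type*} [AddCommMonoid M] (hxy : x ≠ y) (φ : Fin 3 → M)
    (η : V → Fin 3) :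
    ∑ z, φ (cfgFlip x y η z) + (φ (η x) + φ (η y))
      = ∑ z, φ (η z) + (φ (pairFlip (η x, η y)).1 + φ (pairFlip (η x, η y)).2) := by
  rw [← cfgFlip_apply_left, ← cfgFlip_apply_right hxy]
  exact sum_add_eq_of_eq_off_pair (F := fun z => φ (cfgFlip x y η z)) (G := fun z => φ (η z)) hxy
    fun z hzx hzy => by rw [cfgFlip_apply_of_ne hzx hzy]

lemma charge_cfgFlip (hxy : x ≠ y) (η : V → Fin 3) : charge (cfgFlip x y η) = charge η := by
  have h := sum_comp_cfgFlip_add hxy (fun a : Fin 3 => (a : ℤ) - 1) η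
  have hpair : ∀ a b : Fin 3, ((pairFlip (a, b)).1 : ℤ) - 1 + (((pairFlip (a, b)).2 : ℤ) - 1)
      = (a : ℤ) - 1 + ((b : ℤ) - 1) := by decide
  rw [hpair] at h
  exact add_right_cancel h

lemma minusCount_cfgFlip_add (hxy : x ≠ y) (η : V → Fin 3) :
    minusCount (cfgFlip x y η) + (if η x = 2 ∧ η y = 0 then 1 else 0)
      = minusCount η + (if η x = 1 ∧ η y = 1 then 1 else 0) := by
  have h := sum_comp_cfgFlip_add hxy (fun a : Fin 3 => if a = 0 then 1 else 0) η
  have hpair : ∀ a b : Fin 3,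
      ((if (pairFlip (a, b)).1 = 0 then 1 else 0) + (if (pairFlip (a, b)).2 = 0 then 1 else 0)
        + (if a = 2 ∧ b = 0 then 1 else 0) : ℕ)
      = (if a = 0 then 1 else 0) + (if b = 0 then 1 else 0)
        + (if a = 1 ∧ b = 1 then 1 else 0) := by decide
  have := hpair (η x) (η y)
  simp only [minusCount, card_filter] at h ⊢
  omega

/-- The unnormalized weight `β ^ X(η)` of `μ_{N,K}`, extended by zero off `Y_{N,K}`. -/
noncomputable def canWeight (β : ℝ) (K : ℤ) (η : V → Fin 3) : ℝ :=
  if charge η = K then β ^ minusCount η else 0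

variable {β : ℝ} {K : ℤ}

lemma canWeight_nonneg (hβ : 0 ≤ β) (η : V → Fin 3) : 0 ≤ canWeight β K η := by
  unfold canWeight; split_ifs <;> positivity

lemma canWeight_cfgFlip (hxy : x ≠ y) {η : V → Fin 3} {m n : ℕ}
    (h : minusCount (cfgFlip x y η) + m = minusCount η + n) :
    canWeight β K (cfgFlip x y η) * β ^ m = canWeight β K η * β ^ n := by
  unfold canWeight
  rw [charge_cfgFlip hxy]
  split_ifs
  · rw [← pow_add, ← pow_add, h]
  · simp

lemma canWeight_cfgFlip_of_exchange (hxy : x ≠ y) {η : V → Fin 3}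
    (hA : ¬(η x = 2 ∧ η y = 0)) (hC : ¬(η x = 1 ∧ η y = 1)) :
    canWeight β K (cfgFlip x y η) = canWeight β K η := by
  simpa using canWeight_cfgFlip (β := β) (K := K) (m := 0) (n := 0) hxy
    (by simpa [hA, hC] using minusCount_cfgFlip_add hxy η)

lemma canWeight_of_annihilation (hxy : x ≠ y) {η : V → Fin 3} (h : η x = 2 ∧ η y = 0) :
    canWeight β K η = β * canWeight β K (cfgFlip x y η) := by
  have := canWeight_cfgFlip (β := β) (K := K) (m := 1) (n := 0) hxy
    (by simpa [h] using minusCount_cfgFlip_add hxy η)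
  rw [pow_one, pow_zero, mul_one] at this
  rw [← this, mul_comm]

lemma canWeight_cfgFlip_of_creation (hxy : x ≠ y) {η : V → Fin 3} (h : η x = 1 ∧ η y = 1) :
    canWeight β K (cfgFlip x y η) = β * canWeight β K η := by
  have := canWeight_cfgFlip (β := β) (K := K) (m := 0) (n := 1) hxy
    (by simpa [h] using minusCount_cfgFlip_add hxy η)
  rw [pow_one, pow_zero, mul_one] at this
  rw [this, mul_comm]

theorem canWeight_mul_rate_cfgFlip (hxy : x ≠ y) {Cp Cm CE CA CC : ℝ} (hCC : CC = β * CA)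
    (η : V → Fin 3) :
    canWeight β K η * rate Cp Cm CE CA CC x y η
      = canWeight β K (cfgFlip x y η) * rate Cp Cm CE CA CC y x (cfgFlip x y η) := by
  by_cases hA : η x = 2 ∧ η y = 0
  · have hflip := cfgFlip_apply_of_annihilation hxy hA
    have hrate : rate Cp Cm CE CA CC x y η = CA := by simp [rate, hA]
    have hrate' : rate Cp Cm CE CA CC y x (cfgFlip x y η) = CC := by simp [rate, hflip]
    rw [canWeight_of_annihilation hxy hA, hrate, hrate', hCC]
    ring
  by_cases hC : η x = 1 ∧ η y = 1
  · have hflip := cfgFlip_apply_of_creation hxy hC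
    have hrate : rate Cp Cm CE CA CC x y η = CC := by simp [rate, hC]
    have hrate' : rate Cp Cm CE CA CC y x (cfgFlip x y η) = CA := by simp [rate, hflip]
    rw [canWeight_cfgFlip_of_creation hxy hC, hrate, hrate', hCC]
    ring
  rw [canWeight_cfgFlip_of_exchange hxy hA hC, rate_swap_cfgFlip_of_exchange hxy _ _ _ _ _ hA hC]

end Weight

theorem sum_neg_generator_mul_eq_of_balance {Ω : Type*} [Fintype Ω] (T : Ω ≃ Ω) (a b f : Ω → ℝ)
    (hab : ∀ ω, a ω = b (T ω)) :
    ∑ ω, -(a ω * (f (T ω) - f ω) + b ω * (f (T.symm ω) - f ω)) * f ω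
      = ∑ ω, a ω * (f (T ω) - f ω) ^ 2 := by
  have hreindex : ∑ ω, b ω * (f (T.symm ω) - f ω) * f ω
      = ∑ ω, a ω * (f ω - f (T ω)) * f (T ω) := by
    rw [← T.sum_comp]
    simp only [Equiv.symm_apply_apply, hab]
  calc ∑ ω, -(a ω * (f (T ω) - f ω) + b ω * (f (T.symm ω) - f ω)) * f ω
      = ∑ ω, (-(a ω * (f (T ω) - f ω) * f ω) - b ω * (f (T.symm ω) - f ω) * f ω) :=
        sum_congr rfl fun _ _ => by ring
    _ = ∑ ω, (-(a ω * (f (T ω) - f ω) * f ω) - a ω * (f ω - f (T ω)) * f (T ω)) := by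
        rw [sum_sub_distrib, hreindex, sum_sub_distrib]
    _ = ∑ ω, a ω * (f (T ω) - f ω) ^ 2 := sum_congr rfl fun _ _ => by ring

section Dirichlet

variable {V : Type*} [Fintype V] [DecidableEq V] {β : ℝ} {K : ℤ} {x y : V}

theorem sum_canWeight_mul_neg_Lbond_mul (hxy : x ≠ y) {Cp Cm CE CA CC : ℝ}
    (hCC : CC = β * CA) (f : (V → Fin 3) → ℝ) :
    ∑ η, canWeight β K η *
        (-(Lbond Cp Cm CE CA CC x y f η + Lbond Cp Cm CE CA CC y x f η) * f η)
      = ∑ η, canWeight β K η * rate Cp Cm CE CA CC x y η * (f (cfgFlip x y η) - f η) ^ 2 := by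
  have h := sum_neg_generator_mul_eq_of_balance (flipEquiv hxy)
    (fun η => canWeight β K η * rate Cp Cm CE CA CC x y η)
    (fun η => canWeight β K η * rate Cp Cm CE CA CC y x η) f
    (canWeight_mul_rate_cfgFlip hxy hCC)
  simp only [flipEquiv, Equiv.coe_fn_mk, Equiv.coe_fn_symm_mk] at h
  rw [← h]
  exact sum_congr rfl fun η _ => by simp only [Lbond]; ring

variable (β K x y) in
noncomputable def bondEnergy (f : (V → Fin 3) → ℝ) (a b : Fin 3) : ℝ :=
  ∑ η ∈ univ.filter (fun η : V → Fin 3 => η x = a ∧ η y = b),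
    canWeight β K η * (f (cfgFlip x y η) - f η) ^ 2

lemma bondEnergy_nonneg (hβ : 0 ≤ β) (f : (V → Fin 3) → ℝ) (a b : Fin 3) :
    0 ≤ bondEnergy β K x y f a b :=
  sum_nonneg fun η _ => mul_nonneg (canWeight_nonneg hβ η) (sq_nonneg _)

theorem sum_canWeight_mul_rate_eq (Cp Cm CE CA CC : ℝ) (f : (V → Fin 3) → ℝ) :
    ∑ η, canWeight β K η * rate Cp Cm CE CA CC x y η * (f (cfgFlip x y η) - f η) ^ 2
      = Cp * bondEnergy β K x y f 2 1 + Cm * bondEnergy β K x y f 1 0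
        + CE * bondEnergy β K x y f 0 2 + CA * bondEnergy β K x y f 2 0
        + CC * bondEnergy β K x y f 1 1 := by
  simp only [bondEnergy, sum_filter, mul_sum, ← sum_add_distrib]
  refine sum_congr rfl fun η _ => ?_
  rcases fin_three_cases (η x) with hx | hx | hx <;>
  rcases fin_three_cases (η y) with hy | hy | hy <;>
  simp [rate, hx, hy, mul_comm, mul_assoc]

theorem canWeight_mul_sq_le_of_minus_plus (hxy : x ≠ y) (hβ : 0 ≤ β) (f : (V → Fin 3) → ℝ)
    {η : V → Fin 3} (h : η x = 0 ∧ η y = 2) :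
    canWeight β K η * (f (cfgFlip x y η) - f η) ^ 2
      ≤ 2 * (canWeight β K (cfgFlip x y η)
            * (f (cfgFlip x y (cfgFlip x y η)) - f (cfgFlip x y η)) ^ 2)
        + 2 * β * (canWeight β K (cfgFlip x y (cfgFlip x y η))
            * (f η - f (cfgFlip x y (cfgFlip x y η))) ^ 2) := by
  set η₁ := cfgFlip x y η
  set η₂ := cfgFlip x y η₁
  have hw₁ : canWeight β K η₁ = canWeight β K η :=
    canWeight_cfgFlip_of_exchange hxy (by simp [h.1]) (by simp [h.1])
  have hw₂ : canWeight β K η₁ = β * canWeight β K η₂ :=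
    canWeight_of_annihilation hxy (cfgFlip_apply_of_minus_plus hxy h)
  have hsq := add_sq_le (a := f η₂ - f η₁) (b := f η - f η₂)
  calc canWeight β K η * (f η₁ - f η) ^ 2
      ≤ canWeight β K η * (2 * ((f η₂ - f η₁) ^ 2 + (f η - f η₂) ^ 2)) :=
        mul_le_mul_of_nonneg_left (by ring_nf at hsq ⊢; linarith) (canWeight_nonneg hβ η)
    _ = 2 * (canWeight β K η₁ * (f η₂ - f η₁) ^ 2)
        + 2 * β * (canWeight β K η₂ * (f η - f η₂) ^ 2) := by
        rw [← hw₁, hw₂]; ring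

theorem bondEnergy_minus_plus_le (hxy : x ≠ y) (hβ : 0 ≤ β) (f : (V → Fin 3) → ℝ) :
    bondEnergy β K x y f 0 2
      ≤ 2 * bondEnergy β K x y f 2 0 + 2 * β * bondEnergy β K x y f 1 1 := by
  set G : Fin 3 → Fin 3 → (V → Fin 3) → ℝ := fun a b η =>
    if η x = a ∧ η y = b then canWeight β K η * (f (cfgFlip x y η) - f η) ^ 2 else 0
  have hG : ∀ a b, bondEnergy β K x y f a b = ∑ η, G a b η := fun a b => sum_filter _ _
  have hG_nonneg : ∀ a b η, 0 ≤ G a b η := fun a b η => by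
    dsimp only [G]; split_ifs
    exacts [mul_nonneg (canWeight_nonneg hβ η) (sq_nonneg _), le_rfl]
  have hpoint : ∀ η, G 0 2 η
      ≤ 2 * G 2 0 (cfgFlip x y η) + 2 * β * G 1 1 (cfgFlip x y (cfgFlip x y η)) := by
    intro η
    by_cases h : η x = 0 ∧ η y = 2
    · have h₁ := cfgFlip_apply_of_minus_plus hxy h
      simp only [G, if_pos h, if_pos h₁, if_pos (cfgFlip_apply_of_annihilation hxy h₁),
        cfgFlip_cfgFlip_cfgFlip hxy h]
      exact canWeight_mul_sq_le_of_minus_plus hxy hβ f h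
    · have h₁ := hG_nonneg 2 0 (cfgFlip x y η)
      have h₂ := hG_nonneg 1 1 (cfgFlip x y (cfgFlip x y η))
      rw [show G 0 2 η = 0 from if_neg h]
      positivity
  calc bondEnergy β K x y f 0 2
      ≤ ∑ η, (2 * G 2 0 (cfgFlip x y η) + 2 * β * G 1 1 (cfgFlip x y (cfgFlip x y η))) := by
        rw [hG]; exact sum_le_sum fun η _ => hpoint η
    _ = 2 * bondEnergy β K x y f 2 0 + 2 * β * bondEnergy β K x y f 1 1 := by
        rw [sum_add_distrib, ← mul_sum, ← mul_sum, sum_comp_cfgFlip hxy (G 2 0),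
          sum_comp_cfgFlip hxy (fun η => G 1 1 (cfgFlip x y η)), sum_comp_cfgFlip hxy (G 1 1),
          hG, hG]

theorem mul_sum_canWeight_mul_neg_Lbond_le (hxy : x ≠ y) (hβ : 0 ≤ β)
    {C Cp Cm CE CA CC : ℝ} (hC : 0 ≤ C) (hCp : C ≤ Cp) (hCm : C ≤ Cm) (hCA : 3 * C ≤ CA)
    (hCE : 0 ≤ CE) (hCC : CC = β * CA) (f : (V → Fin 3) → ℝ) :
    C * ∑ η, canWeight β K η * (-(Lbond 1 1 1 1 β x y f η + Lbond 1 1 1 1 β y x f η) * f η)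
      ≤ ∑ η, canWeight β K η *
          (-(Lbond Cp Cm CE CA CC x y f η + Lbond Cp Cm CE CA CC y x f η) * f η) := by
  rw [sum_canWeight_mul_neg_Lbond_mul hxy (mul_one β).symm,
    sum_canWeight_mul_neg_Lbond_mul hxy hCC, sum_canWeight_mul_rate_eq, sum_canWeight_mul_rate_eq]
  have hexchange := bondEnergy_minus_plus_le (K := K) hxy hβ f
  have h21 := bondEnergy_nonneg (K := K) (x := x) (y := y) hβ f 2 1
  have h10 := bondEnergy_nonneg (K := K) (x := x) (y := y) hβ f 1 0
  have h02 := bondEnergy_nonneg (K := K) (x := x) (y := y) hβ f 0 2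
  have h20 := bondEnergy_nonneg (K := K) (x := x) (y := y) hβ f 2 0
  have h11 := bondEnergy_nonneg (K := K) (x := x) (y := y) hβ f 1 1
  rw [hCC]
  nlinarith [mul_le_mul_of_nonneg_right hCp h21, mul_le_mul_of_nonneg_right hCm h10,
    mul_le_mul_of_nonneg_left hexchange hC, mul_le_mul_of_nonneg_right hCA h20,
    mul_le_mul_of_nonneg_right hCA (mul_nonneg hβ h11), mul_nonneg hCE h02]

end Dirichlet

lemma canMean_eq_sum_canWeight_mul (d N : ℕ) (β : ℝ) (K : ℤ)
    (g : ((Fin d → Fin N) → Fin 3) → ℝ) :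
    canMean d N β K g = (∑ η, canWeight β K η * g η) / canZ d N β K := by
  unfold canMean canWeight
  congr 1
  exact sum_congr rfl fun η _ => by split_ifs <;> simp

lemma canZ_nonneg (d N : ℕ) {β : ℝ} (hβ : 0 ≤ β) (K : ℤ) : 0 ≤ canZ d N β K :=
  sum_nonneg fun η _ => canWeight_nonneg hβ η

theorem dirichlet_form_comparison_general
    (d : ℕ) (Cp Cm CE CA CC : ℝ)
    (hCp : 0 < Cp) (hCm : 0 < Cm) (hCA : 0 < CA) (hCC : 0 < CC) (hCE : 0 ≤ CE) :
    ∃ C : ℝ, 0 < C ∧ ∀ N : ℕ, 0 < N → ∀ K : ℤ,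
      -((N : ℤ) ^ d) ≤ K → K ≤ (N : ℤ) ^ d →
      ∀ f : ((Fin d → Fin N) → Fin 3) → ℝ, ∀ x y : Fin d → Fin N, x ≠ y →
        C * canMean d N (CC / CA) K
            (fun η => -(Lbond 1 1 1 1 (CC / CA) x y f η + Lbond 1 1 1 1 (CC / CA) y x f η) * f η)
          ≤ canMean d N (CC / CA) K
            (fun η => -(Lbond Cp Cm CE CA CC x y f η + Lbond Cp Cm CE CA CC y x f η) * f η) := by
  have hβ : 0 ≤ CC / CA := by positivity
  have hCC_eq : CC = CC / CA * CA := (div_mul_cancel₀ CC hCA.ne').symm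
  refine ⟨min Cp (min Cm (CA / 3)), by positivity, fun N _ K _ _ f x y hxy => ?_⟩
  rw [canMean_eq_sum_canWeight_mul, canMean_eq_sum_canWeight_mul, ← mul_div_assoc]
  refine div_le_div_of_nonneg_right ?_ (canZ_nonneg d N hβ K)
  refine mul_sum_canWeight_mul_neg_Lbond_le hxy hβ (by positivity) (min_le_left _ _)
    ((min_le_right _ _).trans (min_le_left _ _)) ?_ hCE hCC_eq f
  linarith [(min_le_right Cp _).trans (min_le_right Cm (CA / 3))]

/-- Lemma in Section 3.4: comparison of single-bond Dirichlet forms.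
The original rates `(C_+, C_-, C_E, C_A, C_C)` dominate the normalized rates
`(1, 1, 1, 1, β)` with `β = C_C/C_A`, up to a positive constant. -/
theorem dirichlet_form_comparison
    (d : ℕ) (hd : 1 ≤ d) (Cp Cm CE CA CC : ℝ)
    (hCp : 0 < Cp) (hCm : 0 < Cm) (hCA : 0 < CA) (hCC : 0 < CC) (hCE : 0 ≤ CE) :
    ∃ C : ℝ, 0 < C ∧ ∀ N : ℕ, 0 < N → ∀ K : ℤ,
      -((N : ℤ) ^ d) ≤ K → K ≤ (N : ℤ) ^ d →
      ∀ f : ((Fin d → Fin N) → Fin 3) → ℝ, ∀ x y : Fin d → Fin N, x ≠ y →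
        C * canMean d N (CC / CA) K
            (fun η => -(Lbond 1 1 1 1 (CC / CA) x y f η + Lbond 1 1 1 1 (CC / CA) y x f η) * f η)
          ≤ canMean d N (CC / CA) K
            (fun η => -(Lbond Cp Cm CE CA CC x y f η + Lbond Cp Cm CE CA CC y x f η) * f η) :=
  dirichlet_form_comparison_general d Cp Cm CE CA CC hCp hCm hCA hCC hCE
end
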